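/- arXiv:1805.09148 — 2 statements merged into one kernel-verified Lean document; each statement's English description precedes it below -/
import Mathlib

section
/- Let X ⊆ ℝ^n be nonempty, convex, and closed, and f : ℝ^n → ℝ be τ-strongly convex (τ > 0) and continuous. For λ ∈ ℝ^p define x(λ) = argmin_{x ∈ X} [f(x) + λᵀ(Ax - b)] (which is unique by strong convexity). Then the map λ ↦ x(λ) is Lipschitz continuous with constant ‖A‖/τ, where ‖A‖ is the operator norm of A. -/
/-!
Write `L_λ z = f z + ⟪A z - b, λ⟫`. Adding an affine function keeps `L_λ` `τ`-strongly convex,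
so its minimizer `x(λ)` over `X` satisfies the quadratic growth bound
`τ/2 ‖x(λ) - y‖² ≤ L_λ y - L_λ x(λ)` for `y ∈ X`. Adding this bound at `(λ, x(μ))` and at
`(μ, x(λ))`, the values of `f` cancel and
`τ ‖x(λ) - x(μ)‖² ≤ ⟪A (x(μ) - x(λ)), λ - μ⟫ ≤ ‖A‖ ‖x(λ) - x(μ)‖ ‖λ - μ‖`.
-/

open scoped RealInnerProductSpace
open Filter Topology

section NormedSpace

variable {E : Type*} [NormedAddCommGroup E] [NormedSpace ℝ E]

theorem StrongConvexOn.add_convexOn {s : Set E} {m : ℝ} {f g : E → ℝ}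
    (hf : StrongConvexOn s m f) (hg : ConvexOn ℝ s g) : StrongConvexOn s m (f + g) := by
  simpa [StrongConvexOn] using hf.add (uniformConvexOn_zero.2 hg)

theorem StrongConvexOn.mul_sq_norm_sub_le_of_isMinOn {s : Set E} {m : ℝ} {g : E → ℝ}
    (hg : StrongConvexOn s m g) {x y : E} (hx : x ∈ s) (hy : y ∈ s) (hmin : IsMinOn g s x) :
    m / 2 * ‖x - y‖ ^ 2 ≤ g y - g x := by
  have hstep : ∀ t ∈ Set.Ioo (0 : ℝ) 1, (1 - t) * (m / 2 * ‖x - y‖ ^ 2) ≤ g y - g x := by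
    rintro t ⟨ht0, ht1⟩
    have hconv := hg.2 hx hy (sub_nonneg.2 ht1.le) ht0.le (sub_add_cancel 1 t)
    have hle := isMinOn_iff.1 hmin _ <|
      hg.1 hx hy (sub_nonneg.2 ht1.le) ht0.le (sub_add_cancel 1 t)
    simp only [smul_eq_mul] at hconv
    have : t * ((1 - t) * (m / 2 * ‖x - y‖ ^ 2)) ≤ t * (g y - g x) := by nlinarith
    exact le_of_mul_le_mul_left this ht0
  have hlim : Tendsto (fun t : ℝ => (1 - t) * (m / 2 * ‖x - y‖ ^ 2)) (𝓝[>] 0)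
      (𝓝 (m / 2 * ‖x - y‖ ^ 2)) := by
    have : Continuous fun t : ℝ => (1 - t) * (m / 2 * ‖x - y‖ ^ 2) := by fun_prop
    simpa using (this.tendsto 0).mono_left nhdsWithin_le_nhds
  exact le_of_tendsto hlim (eventually_of_mem (Ioo_mem_nhdsGT one_pos) hstep)

end NormedSpace

section InnerProductSpace

variable {E F : Type*} [NormedAddCommGroup E] [InnerProductSpace ℝ E]
  [NormedAddCommGroup F] [InnerProductSpace ℝ F]

theorem convexOn_inner_sub {s : Set E} (hs : Convex ℝ s) (A : E →L[ℝ] F) (b lam : F) :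
    ConvexOn ℝ s fun z => ⟪A z - b, lam⟫ := by
  have hlin : ConvexOn ℝ s fun z => ⟪A z, lam⟫ :=
    ((innerₗ F lam).comp A.toLinearMap).convexOn hs |>.congr fun z _ => real_inner_comm _ _
  exact (hlin.add_const (-⟪b, lam⟫)).congr fun z _ => by
    simp only [Pi.add_apply, inner_sub_left]; ring

theorem StrongConvexOn.add_inner_sub {s : Set E} {τ : ℝ} {f : E → ℝ}
    (hf : StrongConvexOn s τ f) (A : E →L[ℝ] F) (b lam : F) :
    StrongConvexOn s τ fun z => f z + ⟪A z - b, lam⟫ :=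
  hf.add_convexOn (convexOn_inner_sub hf.1 A b lam)

theorem StrongConvexOn.mul_sq_norm_sub_le_inner_of_isMinOn {s : Set E} {τ : ℝ} {f : E → ℝ}
    (hf : StrongConvexOn s τ f) (A : E →L[ℝ] F) (b : F) {lam mu : F} {x y : E}
    (hx : x ∈ s) (hy : y ∈ s)
    (hxmin : IsMinOn (fun z => f z + ⟪A z - b, lam⟫) s x)
    (hymin : IsMinOn (fun z => f z + ⟪A z - b, mu⟫) s y) :
    τ * ‖x - y‖ ^ 2 ≤ ⟪A (y - x), lam - mu⟫ := by
  have hlam := (hf.add_inner_sub A b lam).mul_sq_norm_sub_le_of_isMinOn hx hy hxmin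
  have hmu := (hf.add_inner_sub A b mu).mul_sq_norm_sub_le_of_isMinOn hy hx hymin
  rw [norm_sub_rev] at hmu
  simp only [map_sub, inner_sub_left, inner_sub_right] at hlam hmu ⊢
  linarith

theorem StrongConvexOn.norm_sub_le_of_isMinOn_add_inner {s : Set E} {τ : ℝ} (hτ : 0 < τ)
    {f : E → ℝ} (hf : StrongConvexOn s τ f) (A : E →L[ℝ] F) (b : F) {lam mu : F} {x y : E}
    (hx : x ∈ s) (hy : y ∈ s)
    (hxmin : IsMinOn (fun z => f z + ⟪A z - b, lam⟫) s x)
    (hymin : IsMinOn (fun z => f z + ⟪A z - b, mu⟫) s y) :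
    ‖x - y‖ ≤ ‖A‖ / τ * ‖lam - mu‖ := by
  have hquad : τ * ‖x - y‖ ^ 2 ≤ ‖x - y‖ * (‖A‖ * ‖lam - mu‖) :=
    calc τ * ‖x - y‖ ^ 2 ≤ ⟪A (y - x), lam - mu⟫ :=
          hf.mul_sq_norm_sub_le_inner_of_isMinOn A b hx hy hxmin hymin
      _ ≤ ‖A (y - x)‖ * ‖lam - mu‖ := real_inner_le_norm _ _
      _ ≤ ‖A‖ * ‖y - x‖ * ‖lam - mu‖ := by gcongr; exact A.le_opNorm _
      _ = ‖x - y‖ * (‖A‖ * ‖lam - mu‖) := by rw [norm_sub_rev]; ring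
  rw [div_mul_eq_mul_div, le_div_iff₀ hτ]
  rcases (norm_nonneg (x - y)).eq_or_lt with h0 | hpos
  · rw [← h0, zero_mul]; positivity
  · nlinarith

end InnerProductSpace

theorem stmt2_general {n p : ℕ} (X : Set (EuclideanSpace ℝ (Fin n)))
    (hXconv : Convex ℝ X)
    (f : EuclideanSpace ℝ (Fin n) → ℝ) (τ : ℝ) (hτ : 0 < τ)
    (hf : ConvexOn ℝ Set.univ (fun x => f x - τ / 2 * ‖x‖ ^ 2))
    (A : EuclideanSpace ℝ (Fin n) →L[ℝ] EuclideanSpace ℝ (Fin p))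
    (b : EuclideanSpace ℝ (Fin p))
    (xmin : EuclideanSpace ℝ (Fin p) → EuclideanSpace ℝ (Fin n))
    (hmem : ∀ lam, xmin lam ∈ X)
    (hmin : ∀ lam, ∀ x ∈ X,
      f (xmin lam) + ⟪A (xmin lam) - b, lam⟫ ≤ f x + ⟪A x - b, lam⟫) :
    ∀ lam mu, ‖xmin lam - xmin mu‖ ≤ ‖A‖ / τ * ‖lam - mu‖ := by
  have hfX : StrongConvexOn X τ f :=
    strongConvexOn_iff_convex.2 (hf.subset (Set.subset_univ X) hXconv)
  intro lam mu
  exact hfX.norm_sub_le_of_isMinOn_add_inner hτ A b (hmem lam) (hmem mu)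
    (isMinOn_iff.2 (hmin lam)) (isMinOn_iff.2 (hmin mu))

/-- The minimizer map `λ ↦ x(λ)` is Lipschitz with constant `‖A‖/τ`. -/
theorem stmt2 {n p : ℕ} (X : Set (EuclideanSpace ℝ (Fin n))) (hXne : X.Nonempty)
    (hXconv : Convex ℝ X) (hXcl : IsClosed X)
    (f : EuclideanSpace ℝ (Fin n) → ℝ) (τ : ℝ) (hτ : 0 < τ)
    (hf : ConvexOn ℝ Set.univ (fun x => f x - τ / 2 * ‖x‖ ^ 2)) (hfc : Continuous f)
    (A : EuclideanSpace ℝ (Fin n) →L[ℝ] EuclideanSpace ℝ (Fin p))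
    (b : EuclideanSpace ℝ (Fin p))
    (xmin : EuclideanSpace ℝ (Fin p) → EuclideanSpace ℝ (Fin n))
    (hmem : ∀ lam, xmin lam ∈ X)
    (hmin : ∀ lam, ∀ x ∈ X,
      f (xmin lam) + ⟪A (xmin lam) - b, lam⟫ ≤ f x + ⟪A x - b, lam⟫) :
    ∀ lam mu, ‖xmin lam - xmin mu‖ ≤ ‖A‖ / τ * ‖lam - mu‖ :=
  stmt2_general X hXconv f τ hτ hf A b xmin hmem hmin
end

section
/- Let h : ℝ^p → ℝ be γ-strongly concave (γ > 0) and differentiable with M-Lipschitz gradient. Let φ : ℝ^p → ℝ^p satisfy ‖φ(z)‖ ≤ c for all z. Define y = z + β(∇h(z) + φ(z)) with 0 < β ≤ γ/(8M²). Then there exists a compact set V ⊆ ℝ^p, depending only on c and h (not on β), such that ‖y‖ ≤ ‖z‖ whenever z ∉ V, and ‖y‖ ≤ R whenever z ∈ V, where R = max_{v ∈ V}{‖v‖ + (γ/(8M²))‖∇h(v)‖} + γc/(8M²). -/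
/-!
Strong concavity makes `h' + γ • id` monotonically decreasing, so with `A = ‖h' 0‖ + c` the step
direction `g = h' z + φ z` satisfies `⟪z, g⟫ ≤ -γ‖z‖² + A‖z‖`, and the Lipschitz bound gives
`‖g‖ ≤ M‖z‖ + A`. Since `‖z + β g‖² = ‖z‖² + β (2⟪z, g⟫ + β‖g‖²)`, as soon as
`‖z‖ ≥ max (2A/γ) (A/M)` the term `2⟪z, g⟫ ≤ -γ‖z‖²` outweighs `β‖g‖² ≤ (γ/(8M²)) 4M²‖z‖²`,
whatever the admissible `β`. So `V` is that closed ball, and on `V` the triangle inequality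
gives the second bound.
-/

open Set Metric
open scoped RealInnerProductSpace

lemma norm_add_le_of_lipschitz {F : Type*} [SeminormedAddCommGroup F] {h' φ : F → F} {M c : ℝ}
    (hlip : ∀ x y, ‖h' x - h' y‖ ≤ M * ‖x - y‖) (hφ : ∀ z, ‖φ z‖ ≤ c) (z : F) :
    ‖h' z + φ z‖ ≤ M * ‖z‖ + (‖h' 0‖ + c) := by
  have hz := hlip z 0
  rw [sub_zero] at hz
  calc ‖h' z + φ z‖ ≤ ‖h' z - h' 0‖ + ‖h' 0‖ + ‖φ z‖ := by
        simpa using norm_add₃_le (a := h' z - h' 0) (b := h' 0) (c := φ z)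
    _ ≤ M * ‖z‖ + (‖h' 0‖ + c) := by linarith [hφ z]

lemma norm_add_smul_add_le {F : Type*} [SeminormedAddCommGroup F] [NormedSpace ℝ F]
    {z u w : F} {β b c : ℝ} (hβ : 0 ≤ β) (hβb : β ≤ b) (hw : ‖w‖ ≤ c) :
    ‖z + β • (u + w)‖ ≤ ‖z‖ + b * ‖u‖ + b * c := calc
  ‖z + β • (u + w)‖ ≤ ‖z‖ + β * (‖u‖ + ‖w‖) := by
    grw [norm_add_le, norm_smul, Real.norm_of_nonneg hβ, norm_add_le]
  _ ≤ ‖z‖ + b * ‖u‖ + b * c := by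
    have := (norm_nonneg w).trans hw
    nlinarith [norm_nonneg u, norm_nonneg w]

variable {E : Type*} [NormedAddCommGroup E] [InnerProductSpace ℝ E]

lemma ConcaveOn.inner_sub_gradient_nonpos [CompleteSpace E] {F : E → ℝ} {F' : E → E}
    (hF : ConcaveOn ℝ univ F) (hF' : ∀ z, HasGradientAt F (F' z) z) (x y : E) :
    ⟪F' x - F' y, x - y⟫ ≤ 0 := by
  have hline (t : ℝ) :
      HasDerivAt (F ∘ AffineMap.lineMap y x) ⟪F' (AffineMap.lineMap y x t), x - y⟫ t := by
    simpa using (hF' _).hasFDerivAt.comp_hasDerivAt t AffineMap.hasDerivAt_lineMap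
  have hanti := (hF.comp_affineMap (AffineMap.lineMap y x)).antitoneOn_deriv
    (fun t _ => (hline t).differentiableAt) (mem_univ 0) (mem_univ 1) zero_le_one
  rw [(hline 0).deriv, (hline 1).deriv] at hanti
  simpa [inner_sub_left] using hanti

lemma HasGradientAt.add_const_mul_norm_sq [CompleteSpace E] {f : E → ℝ} {f' x : E}
    (hf : HasGradientAt f f' x) (γ : ℝ) :
    HasGradientAt (fun z => f z + γ / 2 * ‖z‖ ^ 2) (f' + γ • x) x := by
  rw [hasGradientAt_iff_hasFDerivAt, map_add]
  refine (hf.hasFDerivAt.add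
    ((hasStrictFDerivAt_norm_sq x).hasFDerivAt.const_mul (γ / 2))).congr_fderiv ?_
  ext v
  simp
  ring

lemma inner_sub_gradient_le_of_concaveOn_add_sq [CompleteSpace E] {h : E → ℝ} {h' : E → E}
    {γ : ℝ} (hconc : ConcaveOn ℝ univ (fun z => h z + γ / 2 * ‖z‖ ^ 2))
    (hgrad : ∀ z, HasGradientAt h (h' z) z) (x y : E) :
    ⟪h' x - h' y, x - y⟫ ≤ -(γ * ‖x - y‖ ^ 2) := by
  have := hconc.inner_sub_gradient_nonpos (fun z => (hgrad z).add_const_mul_norm_sq γ) x y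
  rw [add_sub_add_comm, ← smul_sub, inner_add_left, real_inner_smul_left,
    real_inner_self_eq_norm_sq] at this
  linarith

lemma inner_add_le_of_inner_sub_le {h' φ : E → E} {γ c : ℝ}
    (hmono : ∀ x y, ⟪h' x - h' y, x - y⟫ ≤ -(γ * ‖x - y‖ ^ 2)) (hφ : ∀ z, ‖φ z‖ ≤ c)
    (z : E) : ⟪z, h' z + φ z⟫ ≤ -(γ * ‖z‖ ^ 2) + (‖h' 0‖ + c) * ‖z‖ := by
  have hz := hmono z 0
  rw [sub_zero, inner_sub_left] at hz
  have h0 : ⟪h' 0, z⟫ ≤ ‖h' 0‖ * ‖z‖ := real_inner_le_norm _ _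
  have hφz : ⟪φ z, z⟫ ≤ c * ‖z‖ :=
    (real_inner_le_norm _ _).trans (mul_le_mul_of_nonneg_right (hφ z) (norm_nonneg z))
  rw [real_inner_comm, inner_add_left]
  linarith

lemma norm_add_smul_le_norm {z g : E} {β : ℝ} (hβ : 0 ≤ β)
    (h : 2 * ⟪z, g⟫ + β * ‖g‖ ^ 2 ≤ 0) : ‖z + β • g‖ ≤ ‖z‖ := by
  have hsq : ‖z + β • g‖ ^ 2 = ‖z‖ ^ 2 + β * (2 * ⟪z, g⟫ + β * ‖g‖ ^ 2) := by
    rw [norm_add_sq_real, real_inner_smul_right, norm_smul, Real.norm_of_nonneg hβ]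
    ring
  refine le_of_sq_le_sq ?_ (norm_nonneg z)
  rw [hsq]
  linarith [mul_nonpos_of_nonneg_of_nonpos hβ h]

lemma norm_add_smul_le_norm_of_max_le_norm {z g : E} {β γ M A : ℝ} (hγ : 0 < γ) (hM : 0 < M)
    (hβ : 0 ≤ β) (hβγ : β ≤ γ / (8 * M ^ 2))
    (hinner : ⟪z, g⟫ ≤ -(γ * ‖z‖ ^ 2) + A * ‖z‖) (hnorm : ‖g‖ ≤ M * ‖z‖ + A)
    (hz : max (2 * A / γ) (A / M) ≤ ‖z‖) : ‖z + β • g‖ ≤ ‖z‖ := by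
  obtain ⟨hAγ, hAM⟩ := max_le_iff.mp hz
  rw [div_le_iff₀ hγ] at hAγ
  rw [div_le_iff₀ hM] at hAM
  have hinner' : ⟪z, g⟫ ≤ -(γ * ‖z‖ ^ 2 / 2) := by nlinarith [norm_nonneg z]
  have hg : ‖g‖ ^ 2 ≤ 4 * M ^ 2 * ‖z‖ ^ 2 := by nlinarith [norm_nonneg g]
  have hβg : β * ‖g‖ ^ 2 ≤ γ * ‖z‖ ^ 2 / 2 := calc
    β * ‖g‖ ^ 2 ≤ γ / (8 * M ^ 2) * (4 * M ^ 2 * ‖z‖ ^ 2) := by gcongr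
    _ = γ * ‖z‖ ^ 2 / 2 := by field_simp; ring
  refine norm_add_smul_le_norm hβ ?_
  nlinarith [norm_nonneg z]

/-- Boundedness lemma for a regularized dual ascent step (Lemma 1). -/
theorem stmt3 {p : ℕ} (h : EuclideanSpace ℝ (Fin p) → ℝ) (γ M c : ℝ)
    (hγ : 0 < γ) (hM : 0 < M)
    (hconc : ConcaveOn ℝ Set.univ (fun z => h z + γ / 2 * ‖z‖ ^ 2))
    (h' : EuclideanSpace ℝ (Fin p) → EuclideanSpace ℝ (Fin p))
    (hgrad : ∀ z, HasGradientAt h (h' z) z)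
    (hlip : ∀ x y, ‖h' x - h' y‖ ≤ M * ‖x - y‖)
    (φ : EuclideanSpace ℝ (Fin p) → EuclideanSpace ℝ (Fin p))
    (hφ : ∀ z, ‖φ z‖ ≤ c) :
    ∃ V : Set (EuclideanSpace ℝ (Fin p)), IsCompact V ∧
      ∀ β : ℝ, 0 < β → β ≤ γ / (8 * M ^ 2) →
        ∀ z, (z ∉ V → ‖z + β • (h' z + φ z)‖ ≤ ‖z‖) ∧
          (z ∈ V → ‖z + β • (h' z + φ z)‖ ≤
            sSup ((fun v => ‖v‖ + γ / (8 * M ^ 2) * ‖h' v‖) '' V) + γ * c / (8 * M ^ 2)) := by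
  set A := ‖h' 0‖ + c
  have hV : IsCompact (closedBall (0 : EuclideanSpace ℝ (Fin p)) (max (2 * A / γ) (A / M))) :=
    isCompact_closedBall _ _
  refine ⟨_, hV, fun β hβ hβγ z => ⟨fun hz => ?_, fun hz => ?_⟩⟩
  · rw [mem_closedBall_zero_iff, not_le] at hz
    exact norm_add_smul_le_norm_of_max_le_norm hγ hM hβ.le hβγ
      (inner_add_le_of_inner_sub_le (inner_sub_gradient_le_of_concaveOn_add_sq hconc hgrad) hφ z)
      (norm_add_le_of_lipschitz hlip hφ z) hz.le
  · have hcont : Continuous h' :=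
      (LipschitzWith.of_dist_le' (by simpa [dist_eq_norm] using hlip)).continuous
    have hbdd := (hV.image
      (by fun_prop : Continuous fun v => ‖v‖ + γ / (8 * M ^ 2) * ‖h' v‖)).bddAbove
    calc ‖z + β • (h' z + φ z)‖ ≤ ‖z‖ + γ / (8 * M ^ 2) * ‖h' z‖ + γ / (8 * M ^ 2) * c :=
          norm_add_smul_add_le hβ.le hβγ (hφ z)
      _ ≤ _ := (add_le_add_left (le_csSup hbdd (mem_image_of_mem _ hz)) _).trans_eq (by ring)
end
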